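/- Neither condition of the relaxed sufficient condition is necessary for feasibility: there exists a feasible OTIMAPP solution in which some agent's path passes through another agent's goal, and there exists a feasible OTIMAPP solution containing a potential cyclic deadlock. -/
import Mathlib


open scoped Classical

/-- An OTIMAPP path set: `n` agents, agent `i` follows the path
`loc i 0, loc i 1, ..., loc i (L i)`; `loc i 0` is its start and `loc i (L i)` its goal. -/
structure OTI (V : Type) (n : ℕ) where
  L : Fin n → ℕ
  loc : Fin n → ℕ → V

namespace OTI

variable {V : Type} {n : ℕ}

/-- Activation of agent `i` in configuration `c` (clocks): the agent advances iff it is not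
at the end of its path and its next vertex is unoccupied. -/
noncomputable def step (P : OTI V n) (c : Fin n → ℕ) (i : Fin n) : Fin n → ℕ :=
  if c i < P.L i ∧ ∀ j, j ≠ i → P.loc j (c j) ≠ P.loc i (c i + 1)
  then Function.update c i (c i + 1) else c

/-- Configuration after the first `k` activations of execution `e`. -/
noncomputable def run (P : OTI V n) (e : ℕ → Fin n) : ℕ → Fin n → ℕ
  | 0 => fun _ => 0
  | k + 1 => P.step (P.run e k) (e k)

/-- An execution is fair when every agent is activated infinitely often. -/
def Fair (e : ℕ → Fin n) : Prop := ∀ (i : Fin n) (k : ℕ), ∃ m, k ≤ m ∧ e m = i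

/-- All agents reach their goals after finitely many activations. -/
def Terminates (P : OTI V n) (e : ℕ → Fin n) : Prop :=
  ∃ k, ∀ i, P.run e k i = P.L i

/-- A feasible OTIMAPP solution: every fair execution terminates. -/
def Feasible (P : OTI V n) : Prop := ∀ e, Fair e → P.Terminates e

/-- A configuration (assignment of clocks) is reachable by some execution. -/
def Reachable (P : OTI V n) (c : Fin n → ℕ) : Prop := ∃ e k, P.run e k = c

/-- A potential cyclic deadlock: distinct agents `σ 0, …, σ k` with clock values `t`
such that each agent's next vertex is the next agent's current vertex, cyclically. -/
def PotentialCyclic (P : OTI V n) {k : ℕ} (σ : Fin (k + 1) → Fin n)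
    (t : Fin (k + 1) → ℕ) : Prop :=
  Function.Injective σ ∧ (∀ m, t m < P.L (σ m)) ∧
    ∀ m, P.loc (σ m) (t m + 1) = P.loc (σ (m + 1)) (t (m + 1))

/-- A reachable cyclic deadlock: a potential cyclic deadlock whose clock values are realized
by some reachable configuration. -/
def ReachableCyclic (P : OTI V n) {k : ℕ} (σ : Fin (k + 1) → Fin n)
    (t : Fin (k + 1) → ℕ) : Prop :=
  P.PotentialCyclic σ t ∧ ∃ c, P.Reachable c ∧ ∀ m, c (σ m) = t m

/-- A potential terminal deadlock `(i, j, tj)`: agent `i`'s goal lies on `j`'s path. -/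
def PotentialTerminal (P : OTI V n) (i j : Fin n) (tj : ℕ) : Prop :=
  i ≠ j ∧ tj ≤ P.L j ∧ P.loc i (P.L i) = P.loc j tj

/-- A reachable terminal deadlock: some execution puts `i` at its goal and `j` at clock `tj - 1`. -/
def ReachableTerminal (P : OTI V n) (i j : Fin n) (tj : ℕ) : Prop :=
  P.PotentialTerminal i j tj ∧ ∃ c, P.Reachable c ∧ c i = P.L i ∧ c j + 1 = tj

/-- The path set is a set of paths on graph `G` with starts `s` and goals `g`. -/
def OnGraph (P : OTI V n) (G : SimpleGraph V) (s g : Fin n → V) : Prop :=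
  (∀ i, P.loc i 0 = s i) ∧ (∀ i, P.loc i (P.L i) = g i) ∧
    ∀ i t, t < P.L i → G.Adj (P.loc i t) (P.loc i (t + 1))

/-- A fragment: a nonempty chain of (agent, clock) pairs with distinct agents, where each
agent's next vertex equals the next agent's current vertex. -/
def IsFragment (P : OTI V n) (l : List (Fin n × ℕ)) : Prop :=
  l ≠ [] ∧ (l.map Prod.fst).Nodup ∧ (∀ p ∈ l, p.2 < P.L p.1) ∧
    l.Chain' fun p q => P.loc p.1 (p.2 + 1) = P.loc q.1 q.2

/-- The vertex a fragment starts from. -/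
def fragStart (P : OTI V n) (l : List (Fin n × ℕ)) : Option V :=
  l.head?.map fun p => P.loc p.1 p.2

/-- The vertex a fragment ends at. -/
def fragEnd (P : OTI V n) (l : List (Fin n × ℕ)) : Option V :=
  l.getLast?.map fun p => P.loc p.1 (p.2 + 1)

end OTI


namespace OTI

variable {V : Type} {n : ℕ}

lemma step_le' (P : OTI V n) (c : Fin n → ℕ) (i j : Fin n) : c j ≤ P.step c i j := by
  unfold step
  split_ifs with h
  · rcases eq_or_ne j i with rfl | hne
    · simp
    · simp [Function.update_of_ne hne]
  · exact le_rfl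

lemma run_le_succ' (P : OTI V n) (e : ℕ → Fin n) (k : ℕ) (i : Fin n) :
    P.run e k i ≤ P.run e (k + 1) i :=
  P.step_le' (P.run e k) (e k) i

lemma run_mono' (P : OTI V n) (e : ℕ → Fin n) {k m : ℕ} (h : k ≤ m) (i : Fin n) :
    P.run e k i ≤ P.run e m i := by
  induction h with
  | refl => exact le_rfl
  | step h ih => exact ih.trans (P.run_le_succ' e _ i)

lemma run_le_L' (P : OTI V n) (e : ℕ → Fin n) (k : ℕ) (i : Fin n) :
    P.run e k i ≤ P.L i := by
  induction k with
  | zero => exact Nat.zero_le _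
  | succ k ih =>
    show P.step (P.run e k) (e k) i ≤ P.L i
    unfold step
    split_ifs with h
    · rcases eq_or_ne i (e k) with rfl | hne
      · simpa using h.1
      · simpa [Function.update_of_ne hne] using ih
    · exact ih

lemma run_incr' (P : OTI V n) (e : ℕ → Fin n) {k : ℕ} {i : Fin n} (he : e k = i)
    (h1 : P.run e k i < P.L i)
    (h2 : ∀ j, j ≠ i → P.loc j (P.run e k j) ≠ P.loc i (P.run e k i + 1)) :
    P.run e (k + 1) i = P.run e k i + 1 := by
  show P.step (P.run e k) (e k) i = _
  subst he
  unfold step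
  rw [if_pos ⟨h1, h2⟩]
  simp

lemma run_persist' (P : OTI V n) (e : ℕ → Fin n) {k m : ℕ} {i : Fin n}
    (h : P.run e k i = P.L i) (hkm : k ≤ m) : P.run e m i = P.L i :=
  le_antisymm (P.run_le_L' e m i) (h ▸ P.run_mono' e hkm i)

lemma climb' (P : OTI V n) (e : ℕ → Fin n) (hf : Fair e) (i : Fin n) (k0 : ℕ)
    (h : ∀ m, k0 ≤ m → P.run e m i < P.L i → e m = i →
      P.run e (m + 1) i = P.run e m i + 1) :
    ∃ m, k0 ≤ m ∧ P.run e m i = P.L i := by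
  suffices H : ∀ d k, k0 ≤ k → P.L i - P.run e k i ≤ d →
      ∃ m, k ≤ m ∧ P.run e m i = P.L i by
    exact H (P.L i) k0 le_rfl (Nat.sub_le _ _)
  intro d
  induction d with
  | zero =>
    intro k hk hd
    have := P.run_le_L' e k i
    exact ⟨k, le_rfl, by omega⟩
  | succ d ih =>
    intro k hk hd
    rcases eq_or_lt_of_le (P.run_le_L' e k i) with heq | hlt
    · exact ⟨k, le_rfl, heq⟩
    · obtain ⟨m, hkm, hem⟩ := hf i k
      rcases eq_or_lt_of_le (P.run_le_L' e m i) with heq | hlt2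
      · exact ⟨m, hkm, heq⟩
      · have hstep := h m (hk.trans hkm) hlt2 hem
        have hmono := P.run_mono' e hkm i
        obtain ⟨m', hm', h2⟩ := ih (m + 1) (by omega) (by omega)
        exact ⟨m', by omega, h2⟩

end OTI

/-! ### Witness instance 1: agent 0 follows 1,2,3 ; agent 1 follows 4,1,2.
Agent 0 passes through agent 1's goal (vertex 2) at time 1. -/

/-- Path of agent 0 in instance 1. -/
def p0fn (t : ℕ) : ℕ := if t = 0 then 1 else if t = 1 then 2 else 3

/-- Path of agent 1 in instance 1. -/
def p1fn (t : ℕ) : ℕ := if t = 0 then 4 else if t = 1 then 1 else 2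

/-- Instance 1. -/
def Pone : OTI ℕ 2 := ⟨![2, 2], ![p0fn, p1fn]⟩

@[simp] lemma Pone_L0 : Pone.L 0 = 2 := rfl
@[simp] lemma Pone_L1 : Pone.L 1 = 2 := rfl
@[simp] lemma Pone_loc0 (t : ℕ) : Pone.loc 0 t = p0fn t := rfl
@[simp] lemma Pone_loc1 (t : ℕ) : Pone.loc 1 t = p1fn t := rfl

lemma fin2_cases (j : Fin 2) : j = 0 ∨ j = 1 := by omega

lemma Pone_inv (e : ℕ → Fin 2) (k : ℕ) :
    Pone.run e k 0 ≤ 2 ∧ Pone.run e k 1 ≤ 2 ∧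
    (1 ≤ Pone.run e k 1 → 1 ≤ Pone.run e k 0) ∧
    (Pone.run e k 1 = 2 → Pone.run e k 0 = 2) := by
  induction k with
  | zero => simp [OTI.run]
  | succ k ih =>
    obtain ⟨h0, h1, h2, h3⟩ := ih
    have e0 : Pone.run e (k + 1) 0 = Pone.step (Pone.run e k) (e k) 0 := rfl
    have e1 : Pone.run e (k + 1) 1 = Pone.step (Pone.run e k) (e k) 1 := rfl
    rw [e0, e1]
    unfold OTI.step
    split_ifs with hg
    · rcases fin2_cases (e k) with he | he <;> rw [he] at hg ⊢
      · have hb := hg.1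
        simp only [Pone_L0] at hb
        simp only [Function.update_self,
          Function.update_of_ne (show (1:Fin 2) ≠ 0 by decide)]
        have hca : Pone.run e k 0 = 0 ∨ Pone.run e k 0 = 1 := by omega
        have hcb : Pone.run e k 1 = 0 ∨ Pone.run e k 1 = 1 ∨ Pone.run e k 1 = 2 := by
          omega
        rcases hca with h | h <;> rcases hcb with h' | h' | h' <;>
          simp_all [p0fn, p1fn]
      · have hb := hg.1
        have hne := hg.2 0 (by decide)
        simp only [Pone_L1] at hb
        simp only [Pone_loc0, Pone_loc1] at hne
        simp only [Function.update_self,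
          Function.update_of_ne (show (0:Fin 2) ≠ 1 by decide)]
        have hca : Pone.run e k 0 = 0 ∨ Pone.run e k 0 = 1 ∨ Pone.run e k 0 = 2 := by
          omega
        have hcb : Pone.run e k 1 = 0 ∨ Pone.run e k 1 = 1 := by omega
        rcases hca with h | h | h <;> rcases hcb with h' | h' <;>
          simp_all [p0fn, p1fn]
    · exact ⟨h0, h1, h2, h3⟩

lemma Pone_feasible : Pone.Feasible := by
  intro e hf
  have hstep0 : ∀ m, 0 ≤ m → Pone.run e m 0 < Pone.L 0 → e m = 0 →
      Pone.run e (m + 1) 0 = Pone.run e m 0 + 1 := by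
    intro m _ hlt hem
    obtain ⟨h0, h1, h2, h3⟩ := Pone_inv e m
    simp only [Pone_L0] at hlt
    refine Pone.run_incr' e hem (by simpa using hlt) ?_
    intro j hj
    rcases fin2_cases j with h | h
    · exact absurd h hj
    subst h
    simp only [Pone_loc0, Pone_loc1]
    have hca : Pone.run e m 0 = 0 ∨ Pone.run e m 0 = 1 := by omega
    have hcb : Pone.run e m 1 = 0 ∨ Pone.run e m 1 = 1 ∨ Pone.run e m 1 = 2 := by omega
    rcases hca with h | h <;> rcases hcb with h' | h' | h' <;> simp_all [p0fn, p1fn]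
  obtain ⟨m0, _, hm0⟩ := Pone.climb' e hf 0 0 hstep0
  have hstep1 : ∀ m, m0 ≤ m → Pone.run e m 1 < Pone.L 1 → e m = 1 →
      Pone.run e (m + 1) 1 = Pone.run e m 1 + 1 := by
    intro m hm hlt hem
    refine Pone.run_incr' e hem hlt ?_
    intro j hj
    rcases fin2_cases j with h | h
    swap
    · exact absurd h hj
    subst h
    have hc0 : Pone.run e m 0 = 2 := Pone.run_persist' e hm0 hm
    simp only [Pone_L1] at hlt
    simp only [Pone_loc0, Pone_loc1]
    have hcb : Pone.run e m 1 = 0 ∨ Pone.run e m 1 = 1 := by omega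
    rcases hcb with h' | h' <;> simp_all [p0fn, p1fn]
  obtain ⟨m1, hm01, hm1⟩ := Pone.climb' e hf 1 m0 hstep1
  refine ⟨m1, fun i => ?_⟩
  rcases fin2_cases i with hi | hi <;> subst hi
  · exact Pone.run_persist' e hm0 hm01
  · exact hm1

/-! ### Witness instance 2: agent 0 follows 1,2,4 ; agent 1 follows 3,1,2,1.
There is a potential cyclic deadlock with clocks (0, 2), yet the instance is feasible. -/

/-- Path of agent 0 in instance 2. -/
def q0fn (t : ℕ) : ℕ := if t = 0 then 1 else if t = 1 then 2 else 4

/-- Path of agent 1 in instance 2. -/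
def q1fn (t : ℕ) : ℕ := if t = 0 then 3 else if t = 1 then 1 else if t = 2 then 2 else 1

/-- Instance 2. -/
def Ptwo : OTI ℕ 2 := ⟨![2, 3], ![q0fn, q1fn]⟩

@[simp] lemma Ptwo_L0 : Ptwo.L 0 = 2 := rfl
@[simp] lemma Ptwo_L1 : Ptwo.L 1 = 3 := rfl
@[simp] lemma Ptwo_loc0 (t : ℕ) : Ptwo.loc 0 t = q0fn t := rfl
@[simp] lemma Ptwo_loc1 (t : ℕ) : Ptwo.loc 1 t = q1fn t := rfl

lemma Ptwo_inv (e : ℕ → Fin 2) (k : ℕ) :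
    Ptwo.run e k 0 ≤ 2 ∧ Ptwo.run e k 1 ≤ 3 ∧
    (1 ≤ Ptwo.run e k 1 → 1 ≤ Ptwo.run e k 0) ∧
    (2 ≤ Ptwo.run e k 1 → Ptwo.run e k 0 = 2) := by
  induction k with
  | zero => simp [OTI.run]
  | succ k ih =>
    obtain ⟨h0, h1, h2, h3⟩ := ih
    have e0 : Ptwo.run e (k + 1) 0 = Ptwo.step (Ptwo.run e k) (e k) 0 := rfl
    have e1 : Ptwo.run e (k + 1) 1 = Ptwo.step (Ptwo.run e k) (e k) 1 := rfl
    rw [e0, e1]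
    unfold OTI.step
    split_ifs with hg
    · rcases fin2_cases (e k) with he | he <;> rw [he] at hg ⊢
      · have hb := hg.1
        simp only [Ptwo_L0] at hb
        simp only [Function.update_self,
          Function.update_of_ne (show (1:Fin 2) ≠ 0 by decide)]
        have hca : Ptwo.run e k 0 = 0 ∨ Ptwo.run e k 0 = 1 := by omega
        have hcb : Ptwo.run e k 1 = 0 ∨ Ptwo.run e k 1 = 1 ∨ Ptwo.run e k 1 = 2 ∨
            Ptwo.run e k 1 = 3 := by omega
        rcases hca with h | h <;> rcases hcb with h' | h' | h' | h' <;>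
          simp_all [q0fn, q1fn]
      · have hb := hg.1
        have hne := hg.2 0 (by decide)
        simp only [Ptwo_L1] at hb
        simp only [Ptwo_loc0, Ptwo_loc1] at hne
        simp only [Function.update_self,
          Function.update_of_ne (show (0:Fin 2) ≠ 1 by decide)]
        have hca : Ptwo.run e k 0 = 0 ∨ Ptwo.run e k 0 = 1 ∨ Ptwo.run e k 0 = 2 := by
          omega
        have hcb : Ptwo.run e k 1 = 0 ∨ Ptwo.run e k 1 = 1 ∨ Ptwo.run e k 1 = 2 := by
          omega
        rcases hca with h | h | h <;> rcases hcb with h' | h' | h' <;>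
          simp_all [q0fn, q1fn]
    · exact ⟨h0, h1, h2, h3⟩

lemma Ptwo_feasible : Ptwo.Feasible := by
  intro e hf
  have hstep0 : ∀ m, 0 ≤ m → Ptwo.run e m 0 < Ptwo.L 0 → e m = 0 →
      Ptwo.run e (m + 1) 0 = Ptwo.run e m 0 + 1 := by
    intro m _ hlt hem
    obtain ⟨h0, h1, h2, h3⟩ := Ptwo_inv e m
    simp only [Ptwo_L0] at hlt
    refine Ptwo.run_incr' e hem (by simpa using hlt) ?_
    intro j hj
    rcases fin2_cases j with h | h
    · exact absurd h hj
    subst h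
    simp only [Ptwo_loc0, Ptwo_loc1]
    have hca : Ptwo.run e m 0 = 0 ∨ Ptwo.run e m 0 = 1 := by omega
    have hcb : Ptwo.run e m 1 = 0 ∨ Ptwo.run e m 1 = 1 ∨ Ptwo.run e m 1 = 2 ∨
        Ptwo.run e m 1 = 3 := by omega
    rcases hca with h | h <;> rcases hcb with h' | h' | h' | h' <;>
      simp_all [q0fn, q1fn]
  obtain ⟨m0, _, hm0⟩ := Ptwo.climb' e hf 0 0 hstep0
  have hstep1 : ∀ m, m0 ≤ m → Ptwo.run e m 1 < Ptwo.L 1 → e m = 1 →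
      Ptwo.run e (m + 1) 1 = Ptwo.run e m 1 + 1 := by
    intro m hm hlt hem
    refine Ptwo.run_incr' e hem hlt ?_
    intro j hj
    rcases fin2_cases j with h | h
    swap
    · exact absurd h hj
    subst h
    have hc0 : Ptwo.run e m 0 = 2 := Ptwo.run_persist' e hm0 hm
    simp only [Ptwo_L1] at hlt
    simp only [Ptwo_loc0, Ptwo_loc1]
    have hcb : Ptwo.run e m 1 = 0 ∨ Ptwo.run e m 1 = 1 ∨ Ptwo.run e m 1 = 2 := by omega
    rcases hcb with h' | h' | h' <;> simp_all [q0fn, q1fn]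
  obtain ⟨m1, hm01, hm1⟩ := Ptwo.climb' e hf 1 m0 hstep1
  refine ⟨m1, fun i => ?_⟩
  rcases fin2_cases i with hi | hi <;> subst hi
  · exact Ptwo.run_persist' e hm0 hm01
  · exact hm1

/-- neither condition of the relaxed sufficient condition is necessary: there is
a feasible solution in which some agent's path passes through another agent's goal (not at its
start), and there is a feasible solution containing a potential cyclic deadlock. -/
theorem relaxed_conditions_not_necessary :
    (∃ (n : ℕ) (P : OTI ℕ n) (G : SimpleGraph ℕ) (s g : Fin n → ℕ),
      Function.Injective s ∧ Function.Injective g ∧ P.OnGraph G s g ∧ P.Feasible ∧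
      ∃ (i j : Fin n) (t : ℕ), i ≠ j ∧ 0 < t ∧ t ≤ P.L i ∧
        P.loc i t = P.loc j (P.L j)) ∧
    (∃ (n : ℕ) (P : OTI ℕ n) (G : SimpleGraph ℕ) (s g : Fin n → ℕ),
      Function.Injective s ∧ Function.Injective g ∧ P.OnGraph G s g ∧ P.Feasible ∧
      ∃ (k : ℕ) (σ : Fin (k + 1) → Fin n) (t : Fin (k + 1) → ℕ),
        P.PotentialCyclic σ t) := by
  constructor
  · refine ⟨2, Pone, ⊤, ![1, 4], ![3, 2], ?_, ?_, ⟨?_, ?_, ?_⟩, Pone_feasible, 0, 1, 1,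
      by omega, by omega, by norm_num, by norm_num [p0fn, p1fn]⟩
    · decide
    · decide
    · intro i; rcases fin2_cases i with hi | hi <;> subst hi <;> norm_num [p0fn, p1fn]
    · intro i; rcases fin2_cases i with hi | hi <;> subst hi <;> norm_num [p0fn, p1fn]
    · intro i t ht
      rcases fin2_cases i with hi | hi <;> subst hi <;>
        simp only [Pone_L0, Pone_L1] at ht <;> interval_cases t <;>
        norm_num [p0fn, p1fn]
  · refine ⟨2, Ptwo, ⊤, ![1, 3], ![4, 1], ?_, ?_, ⟨?_, ?_, ?_⟩, Ptwo_feasible, 1, id, ![0, 2],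
      Function.injective_id, ?_, ?_⟩
    · decide
    · decide
    · intro i; rcases fin2_cases i with hi | hi <;> subst hi <;> norm_num [q0fn, q1fn]
    · intro i; rcases fin2_cases i with hi | hi <;> subst hi <;> norm_num [q0fn, q1fn]
    · intro i t ht
      rcases fin2_cases i with hi | hi <;> subst hi <;>
        simp only [Ptwo_L0, Ptwo_L1] at ht <;> interval_cases t <;>
        norm_num [q0fn, q1fn]
    · intro m; rcases fin2_cases m with hm | hm <;> subst hm <;> norm_num
    · decide
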